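/- arXiv:1009.1635 — 2 statements merged into one kernel-verified Lean document; each statement's English description precedes it below -/
import Mathlib

section
/- Pauling-type bound on the generic degeneracy: For every k-QSAT interaction hypergraph on N qubits with M clauses, each of size k, the minimal kernel dimension satisfies min over all choices of clause vectors φ of dim ker H_φ ≤ 2^N (1 − 2^{−k})^M. In particular, if M > N · (−1/log₂(1 − 2^{−k})) then this minimum is strictly less than 1, i.e., there exists a choice of projectors with trivial kernel. -/
/-!
Take every clause vector to be a computational basis vector `|x_m⟩`. Then `H_φ` is diagonal in
the computational basis, and its kernel is spanned by the basis states `σ` that differ from `x_m`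
on `S_m` for every `m`. For uniformly random `x`, each `σ` survives with probability
`(1 - 2^{-k})^M`, so the average kernel dimension is `2^N (1 - 2^{-k})^M` and some `x` does at
least as well. Above the stated threshold for `M` this bound is below `1`.
-/

open scoped BigOperators

noncomputable section

/-- The matrix of the rank-one projector `|φ⟩⟨φ|` acting on the qubits in the
`k`-element set `S` and as the identity on the remaining qubits. -/
def clauseProj {N : ℕ} (S : Finset (Fin N)) (φ : ({i // i ∈ S} → Fin 2) → ℂ) :
    Matrix (Fin N → Fin 2) (Fin N → Fin 2) ℂ :=
  fun σ τ =>
    (if ∀ i : Fin N, i ∉ S → σ i = τ i then (1 : ℂ) else 0) *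
      φ (fun i => σ i.1) * (starRingEnd ℂ) (φ (fun i => τ i.1))

/-- The `k`-QSAT Hamiltonian `H_φ = ∑ m, Π_m` associated to the interaction
hypergraph `S : Fin M → Finset (Fin N)` and the clause vectors `φ m`. -/
def qsatHam {N M : ℕ} (S : Fin M → Finset (Fin N))
    (φ : ∀ m, ({i // i ∈ S m} → Fin 2) → ℂ) :
    Matrix (Fin N → Fin 2) (Fin N → Fin 2) ℂ :=
  ∑ m, clauseProj (S m) (φ m)

/-- `φ` is a unit vector. -/
def IsUnitVec {α : Type*} [Fintype α] (φ : α → ℂ) : Prop :=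
  ∑ x, Complex.normSq (φ x) = 1

/-- The dimension of the zero-energy eigenspace `ker H_φ`. -/
def kerDim {N M : ℕ} (S : Fin M → Finset (Fin N))
    (φ : ∀ m, ({i // i ∈ S m} → Fin 2) → ℂ) : ℕ :=
  Module.finrank ℂ (LinearMap.ker (Matrix.mulVecLin (qsatHam S φ)))

open Finset

lemma isUnitVec_single {α : Type*} [Fintype α] [DecidableEq α] (x : α) :
    IsUnitVec (Pi.single x (1 : ℂ)) := by
  simp [IsUnitVec, Pi.single_apply, apply_ite Complex.normSq]

lemma clauseProj_single {N : ℕ} (S : Finset (Fin N)) (x : S → Fin 2) :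
    clauseProj S (Pi.single x 1) =
      Matrix.diagonal fun σ : Fin N → Fin 2 => if S.restrict σ = x then 1 else 0 := by
  ext σ τ
  simp only [clauseProj, Matrix.diagonal_apply, restrict_def, Pi.single_apply]
  by_cases hστ : σ = τ
  · subst hστ
    by_cases h : (fun i : S => σ i) = x <;> simp [h]
  · rw [if_neg hστ]
    by_cases hσ : (fun i : S => σ i) = x
    · by_cases hτ : (fun i : S => τ i) = x
      · have hout : ¬∀ i ∉ S, σ i = τ i := fun hout => hστ <| funext fun i =>
          if hi : i ∈ S then (congrFun hσ ⟨i, hi⟩).trans (congrFun hτ ⟨i, hi⟩).symm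
          else hout i hi
        simp [hout]
      · simp [hτ]
    · simp [hσ]

lemma qsatHam_single {N M : ℕ} (S : Fin M → Finset (Fin N)) (x : ∀ m, S m → Fin 2) :
    qsatHam S (fun m => Pi.single (x m) 1) =
      Matrix.diagonal fun σ : Fin N → Fin 2 => (#{m | (S m).restrict σ = x m} : ℂ) := by
  simp only [qsatHam, clauseProj_single, natCast_card_filter]
  ext σ τ
  by_cases hστ : σ = τ <;> simp [Matrix.sum_apply, hστ]

lemma Matrix.finrank_ker_mulVecLin_diagonal {n K : Type*} [Fintype n] [DecidableEq n]
    [Field K] (d : n → K) :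
    Module.finrank K (LinearMap.ker (Matrix.diagonal d).mulVecLin) =
      Nat.card {i // d i = 0} := by
  classical
  have hrank := LinearMap.finrank_range_add_finrank_ker (Matrix.diagonal d).mulVecLin
  rw [Module.finrank_fintype_fun_eq_card, ← Matrix.rank, Matrix.rank_diagonal,
    Fintype.card_subtype_compl] at hrank
  have := Fintype.card_subtype_le fun i => d i = 0
  rw [Nat.card_eq_fintype_card]
  omega

lemma kerDim_single {N M : ℕ} (S : Fin M → Finset (Fin N)) (x : ∀ m, S m → Fin 2) :
    kerDim S (fun m => Pi.single (x m) 1) =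
      #{σ : Fin N → Fin 2 | ∀ m, (S m).restrict σ ≠ x m} := by
  rw [kerDim, qsatHam_single, Matrix.finrank_ker_mulVecLin_diagonal, Nat.card_eq_fintype_card,
    Fintype.card_subtype]
  simp [filter_eq_empty_iff]

section Counting

variable {ι α : Type*} {β : ι → Type*} [Fintype ι] [DecidableEq ι] [Fintype α]
  [∀ i, Fintype (β i)] [∀ i, DecidableEq (β i)]

lemma sum_card_filter_forall_ne (f : ∀ i, α → β i) :
    ∑ x : ∀ i, β i, #{a | ∀ i, f i a ≠ x i} =
      Fintype.card α * ∏ i, (Fintype.card (β i) - 1) := by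
  have hfiber (a : α) :
      #{x : ∀ i, β i | ∀ i, f i a ≠ x i} = ∏ i, (Fintype.card (β i) - 1) := by
    have hpi : ({x | ∀ i, f i a ≠ x i} : Finset (∀ i, β i)) =
        Fintype.piFinset fun i => {f i a}ᶜ := by
      ext x; simp [eq_comm]
    simp [hpi, card_compl]
  simp_rw [card_filter]
  rw [sum_comm]
  simp [hfiber]

lemma exists_card_filter_forall_ne_le [∀ i, Nonempty (β i)] (f : ∀ i, α → β i) :
    ∃ x : ∀ i, β i, (#{a | ∀ i, f i a ≠ x i} : ℝ) ≤
      Fintype.card α * ∏ i, (1 - (Fintype.card (β i) : ℝ)⁻¹) := by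
  have hcard (i : ι) : (1 : ℝ) ≤ Fintype.card (β i) := by exact_mod_cast Fintype.card_pos
  have hsum : ∑ x : ∀ i, β i, (#{a | ∀ i, f i a ≠ x i} : ℝ) =
      ∑ _x : ∀ i, β i, Fintype.card α * ∏ i, (1 - (Fintype.card (β i) : ℝ)⁻¹) := by
    rw [← Nat.cast_sum, sum_card_filter_forall_ne, sum_const, card_univ, Fintype.card_pi,
      nsmul_eq_mul]
    push_cast [Nat.cast_sub (Nat.one_le_cast.mp (hcard _))]
    rw [mul_left_comm, ← prod_mul_distrib]
    congr 2 with i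
    field_simp [(zero_lt_one.trans_le (hcard i)).ne']
  obtain ⟨x, -, hx⟩ := exists_le_of_sum_le univ_nonempty hsum.le
  exact ⟨x, hx⟩

end Counting

lemma exists_kerDim_le {N M k : ℕ} (S : Fin M → Finset (Fin N)) (hS : ∀ m, (S m).card = k) :
    ∃ φ : ∀ m, ({i // i ∈ S m} → Fin 2) → ℂ, (∀ m, IsUnitVec (φ m)) ∧
      (kerDim S φ : ℝ) ≤ 2 ^ N * (1 - ((2 : ℝ) ^ k)⁻¹) ^ M := by
  obtain ⟨x, hx⟩ :=
    exists_card_filter_forall_ne_le fun m (σ : Fin N → Fin 2) => (S m).restrict σ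
  refine ⟨fun m => Pi.single (x m) 1, fun m => isUnitVec_single _, ?_⟩
  rw [kerDim_single]
  simpa [hS] using hx

lemma two_pow_mul_pow_lt_one {N M : ℕ} {q : ℝ} (hq0 : 0 ≤ q) (hq1 : q < 1)
    (hM : (M : ℝ) > N * (-1 / Real.logb 2 q)) : 2 ^ N * q ^ M < 1 := by
  rcases hq0.eq_or_lt with rfl | hq_pos
  · have hMpos : 0 < M := by simpa using hM
    simp [zero_pow hMpos.ne']
  have hlog : Real.logb 2 q < 0 := Real.logb_neg one_lt_two hq_pos hq1
  have hexp : (N : ℝ) + M * Real.logb 2 q < 0 := by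
    rw [gt_iff_lt, mul_div_assoc', mul_neg_one, div_lt_iff_of_neg hlog] at hM
    linarith
  calc (2 : ℝ) ^ N * q ^ M = 2 ^ ((N : ℝ) + M * Real.logb 2 q) := by
        rw [Real.rpow_add two_pos, Real.rpow_natCast, mul_comm (M : ℝ),
          Real.rpow_mul zero_le_two, Real.rpow_logb two_pos one_lt_two.ne' hq_pos,
          Real.rpow_natCast]
    _ < 1 := Real.rpow_lt_one_of_one_lt_of_neg one_lt_two hexp

/-- **Pauling bound on the generic degeneracy.**  The minimal zero-energy degeneracy
over choices of (unit) clause vectors is at most `2^N (1 - 2^{-k})^M`; in particular,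
if `M > N ⋅ (-1 / log₂(1 - 2^{-k}))` then some choice of projectors has trivial
kernel. -/
theorem pauling_bound (N M k : ℕ)
    (S : Fin M → Finset (Fin N)) (hS : ∀ m, (S m).card = k) :
    ((sInf {r : ℕ | ∃ φ : ∀ m, ({i // i ∈ S m} → Fin 2) → ℂ,
        (∀ m, IsUnitVec (φ m)) ∧ kerDim S φ = r} : ℕ) : ℝ) ≤
      2 ^ N * (1 - ((2 : ℝ) ^ k)⁻¹) ^ M ∧
    ((M : ℝ) > (N : ℝ) * (-1 / Real.logb 2 (1 - ((2 : ℝ) ^ k)⁻¹)) →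
      ∃ φ : ∀ m, ({i // i ∈ S m} → Fin 2) → ℂ,
        (∀ m, IsUnitVec (φ m)) ∧ kerDim S φ = 0) := by
  obtain ⟨φ, hunit, hφ⟩ := exists_kerDim_le S hS
  refine ⟨le_trans ?_ hφ, fun hM => ⟨φ, hunit, ?_⟩⟩
  · exact Nat.cast_le.mpr (Nat.sInf_le ⟨φ, hunit, rfl⟩)
  · have hq0 : 0 ≤ 1 - ((2 : ℝ) ^ k)⁻¹ :=
      sub_nonneg.mpr (inv_le_one_of_one_le₀ (one_le_pow₀ one_le_two))
    have hq1 : 1 - ((2 : ℝ) ^ k)⁻¹ < 1 := sub_lt_self _ (by positivity)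
    have hlt : (kerDim S φ : ℝ) < 1 := hφ.trans_lt (two_pow_mul_pow_lt_one hq0 hq1 hM)
    exact Nat.lt_one_iff.mp (by exact_mod_cast hlt)

end
end

section
/- Decoupling of the propagation Hamiltonian: With H_p as above, let V = Σ_{t=0}^{T} |t⟩⟨t| ⊗ (U_t U_{t−1} ⋯ U_1) on ℂ^{T+1} ⊗ W (empty product = Id_W). Then V is unitary and V† H_p V = L ⊗ Id_W, where L is the (T+1) × (T+1) matrix with diagonal entries L_{00} = L_{TT} = 1/2 and L_{tt} = 1 for 0 < t < T, off-diagonal entries L_{t,t+1} = L_{t+1,t} = −1/2, and all other entries zero (i.e., one half of the graph Laplacian of the path on vertices 0, …, T). -/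
open scoped BigOperators

noncomputable section

/-- `histFun T U t` is the composite `U_t ∘ U_{t-1} ∘ ⋯ ∘ U_1` of the first `t`
circuit unitaries (the empty composite for `t = 0` being the identity). -/
def histFun {W : Type*} [NormedAddCommGroup W] [InnerProductSpace ℂ W]
    (T : ℕ) (U : Fin T → (W ≃ₗᵢ[ℂ] W)) : ℕ → W → W
  | 0 => id
  | n + 1 => if h : n < T then (fun w => U ⟨n, h⟩ (histFun T U n w)) else histFun T U n

/-- Feynman–Kitaev propagation Hamiltonian
`H_p = (1/2) ∑_{t=0}^{T-1} [(|t⟩⟨t| + |t+1⟩⟨t+1|) ⊗ 1 - |t+1⟩⟨t| ⊗ U_{t+1} - |t⟩⟨t+1| ⊗ U_{t+1}†]`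
acting on `ℂ^{T+1} ⊗ W`, realized as the space of functions `Fin (T+1) → W`. -/
def propHam {W : Type*} [NormedAddCommGroup W] [InnerProductSpace ℂ W]
    (T : ℕ) (U : Fin T → (W ≃ₗᵢ[ℂ] W)) :
    ((Fin (T + 1) → W) →ₗ[ℂ] (Fin (T + 1) → W)) :=
  (2 : ℂ)⁻¹ • ∑ t : Fin T,
    ((LinearMap.single ℂ (fun _ : Fin (T + 1) => W) t.castSucc) ∘ₗ
        ((LinearMap.proj t.castSucc : (∀ _ : Fin (T + 1), W) →ₗ[ℂ] W) -
          ((U t).symm.toLinearEquiv.toLinearMap ∘ₗ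
            (LinearMap.proj t.succ : (∀ _ : Fin (T + 1), W) →ₗ[ℂ] W))) +
      (LinearMap.single ℂ (fun _ : Fin (T + 1) => W) t.succ) ∘ₗ
        ((LinearMap.proj t.succ : (∀ _ : Fin (T + 1), W) →ₗ[ℂ] W) -
          ((U t).toLinearEquiv.toLinearMap ∘ₗ
            (LinearMap.proj t.castSucc : (∀ _ : Fin (T + 1), W) →ₗ[ℂ] W))))

/-- One half of the graph Laplacian of the path on vertices `0, …, T`:
diagonal entries `1/2` at the two endpoints and `1` in between, off-diagonal entries
`-1/2` between neighbours. -/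
def neumannChain (T : ℕ) : Matrix (Fin (T + 1)) (Fin (T + 1)) ℝ :=
  fun t s =>
    if t = s then (if t.val = 0 ∨ t.val = T then 1 / 2 else 1)
    else if t.val + 1 = s.val ∨ s.val + 1 = t.val then -(1 / 2) else 0

/-- The basis change `V = ∑_t |t⟩⟨t| ⊗ U_t U_{t-1} ⋯ U_1`. -/
def clockRotation {W : Type*} [NormedAddCommGroup W] [InnerProductSpace ℂ W]
    (T : ℕ) (U : Fin T → (W ≃ₗᵢ[ℂ] W)) :
    (Fin (T + 1) → W) → (Fin (T + 1) → W) :=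
  fun ψ t => histFun T U t.val (ψ t)

/-!
Since `U_{t+1} (U_t ⋯ U_1) = U_{t+1} ⋯ U_1`, conjugating by `V` turns every hopping term
`|t+1⟩⟨t| ⊗ U_{t+1}` into `|t+1⟩⟨t| ⊗ Id_W`, so `V† H_p V` is the propagation Hamiltonian of
the trivial circuit. That one is `L ⊗ Id_W` because `L = ½ ∑_t b_t b_tᵀ`, where
`b_t = e_t - e_{t+1}` is the oriented incidence vector of the edge `{t, t+1}` of the path.
-/

open Finset Matrix

section

variable {W : Type*} [NormedAddCommGroup W] [InnerProductSpace ℂ W]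

def histEquiv (T : ℕ) (U : Fin T → (W ≃ₗᵢ[ℂ] W)) : ℕ → (W ≃ₗᵢ[ℂ] W)
  | 0 => LinearIsometryEquiv.refl ℂ W
  | n + 1 => if h : n < T then (histEquiv T U n).trans (U ⟨n, h⟩) else histEquiv T U n

theorem histFun_eq_histEquiv (T : ℕ) (U : Fin T → (W ≃ₗᵢ[ℂ] W)) (n : ℕ) :
    histFun T U n = histEquiv T U n := by
  induction n with
  | zero => rfl
  | succ n ih => by_cases h : n < T <;> simp [histFun, histEquiv, h, ih, Function.comp_def]

theorem histEquiv_succ (T : ℕ) (U : Fin T → (W ≃ₗᵢ[ℂ] W)) (t : Fin T) (w : W) :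
    histEquiv T U (t + 1) w = U t (histEquiv T U t w) := by
  simp [histEquiv, t.isLt]

theorem clockRotation_apply (T : ℕ) (U : Fin T → (W ≃ₗᵢ[ℂ] W)) (ψ : Fin (T + 1) → W)
    (t : Fin (T + 1)) : clockRotation T U ψ t = histEquiv T U t (ψ t) := by
  rw [clockRotation, histFun_eq_histEquiv]

def clockRotationEquiv (T : ℕ) (U : Fin T → (W ≃ₗᵢ[ℂ] W)) :
    (Fin (T + 1) → W) ≃ₗ[ℂ] (Fin (T + 1) → W) :=
  LinearEquiv.piCongrRight fun t => (histEquiv T U t).toLinearEquiv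

theorem coe_clockRotationEquiv (T : ℕ) (U : Fin T → (W ≃ₗᵢ[ℂ] W)) :
    ⇑(clockRotationEquiv T U) = clockRotation T U := by
  ext ψ t
  rw [clockRotation_apply]
  rfl

theorem sum_inner_clockRotation (T : ℕ) (U : Fin T → (W ≃ₗᵢ[ℂ] W)) (ψ χ : Fin (T + 1) → W) :
    ∑ t, inner ℂ (clockRotation T U ψ t) (clockRotation T U χ t) = ∑ t, inner ℂ (ψ t) (χ t) := by
  simp only [clockRotation_apply, LinearIsometryEquiv.inner_map_map]

theorem propHam_apply (T : ℕ) (U : Fin T → (W ≃ₗᵢ[ℂ] W)) (x : Fin (T + 1) → W)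
    (s : Fin (T + 1)) :
    propHam T U x s = (2 : ℂ)⁻¹ • ∑ t : Fin T,
      ((if s = t.castSucc then x t.castSucc - (U t).symm (x t.succ) else 0) +
        (if s = t.succ then x t.succ - U t (x t.castSucc) else 0)) := by
  simp [propHam, Pi.single_apply]

theorem propHam_refl_apply (T : ℕ) (ψ : Fin (T + 1) → W) (s : Fin (T + 1)) :
    propHam T (fun _ => LinearIsometryEquiv.refl ℂ W) ψ s = (2 : ℂ)⁻¹ • ∑ t : Fin T,
      ((if s = t.castSucc then ψ t.castSucc - ψ t.succ else 0) +
        (if s = t.succ then ψ t.succ - ψ t.castSucc else 0)) :=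
  propHam_apply T _ ψ s

theorem propHam_clockRotation (T : ℕ) (U : Fin T → (W ≃ₗᵢ[ℂ] W)) (ψ : Fin (T + 1) → W) :
    propHam T U (clockRotation T U ψ) =
      clockRotation T U (propHam T (fun _ => LinearIsometryEquiv.refl ℂ W) ψ) := by
  ext s
  have hU_symm (t : Fin T) :
      (U t).symm (clockRotation T U ψ t.succ) = histEquiv T U t (ψ t.succ) := by
    rw [clockRotation_apply, Fin.val_succ, histEquiv_succ, LinearIsometryEquiv.symm_apply_apply]
  have hU (t : Fin T) :
      U t (clockRotation T U ψ t.castSucc) = histEquiv T U (t + 1) (ψ t.castSucc) := by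
    rw [clockRotation_apply, Fin.val_castSucc, histEquiv_succ]
  rw [propHam_apply, clockRotation_apply, propHam_refl_apply, map_smul, map_sum]
  congr 1
  refine sum_congr rfl fun t _ => ?_
  rw [hU_symm, hU, clockRotation_apply, clockRotation_apply, map_add]
  have hne : t.castSucc ≠ t.succ := Fin.castSucc_lt_succ.ne
  by_cases hc : s = t.castSucc
  · subst hc
    simp [hne, map_sub]
  by_cases hs : s = t.succ
  · subst hs
    simp [hne.symm, map_sub]
  · simp [hc, hs]

theorem sum_range_incidence_mul_incidence (a b n : ℕ) :
    ∑ t ∈ range n, (((if a = t then 1 else 0) - (if a = t + 1 then 1 else 0)) *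
      ((if b = t then 1 else 0) - (if b = t + 1 then 1 else 0)) : ℝ) =
    if a = b then ((if a < n then 1 else 0) + (if 0 < a ∧ a ≤ n then 1 else 0))
    else if a + 1 = b ∧ a < n ∨ b + 1 = a ∧ b < n then -1 else 0 := by
  induction n with
  | zero => simp; omega
  | succ n ih =>
    rw [sum_range_succ, ih]
    split_ifs <;> first | omega | norm_num

def pathIncidence (T : ℕ) (t : Fin T) : Fin (T + 1) → ℝ :=
  Pi.single t.castSucc 1 - Pi.single t.succ 1

theorem neumannChain_eq_sum_vecMulVec (T : ℕ) (hT : 1 ≤ T) :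
    neumannChain T = (2 : ℝ)⁻¹ • ∑ t, vecMulVec (pathIncidence T t) (pathIncidence T t) := by
  ext s r
  simp only [Matrix.smul_apply, Matrix.sum_apply, vecMulVec_apply, pathIncidence, Pi.sub_apply,
    Pi.single_apply, Fin.ext_iff, Fin.val_castSucc, Fin.val_succ]
  rw [Fin.sum_univ_eq_sum_range (fun t => ((if (s : ℕ) = t then 1 else 0) -
    (if (s : ℕ) = t + 1 then 1 else 0)) * ((if (r : ℕ) = t then 1 else 0) -
    (if (r : ℕ) = t + 1 then 1 else 0)) : ℕ → ℝ), sum_range_incidence_mul_incidence]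
  have := s.isLt
  have := r.isLt
  simp only [neumannChain, Fin.ext_iff]
  split_ifs <;> first | omega | norm_num

theorem sum_pathIncidence_smul {M : Type*} [AddCommGroup M] [Module ℝ M] (T : ℕ) (t : Fin T)
    (x : Fin (T + 1) → M) :
    ∑ r, pathIncidence T t r • x r = x t.castSucc - x t.succ := by
  simp [pathIncidence, sub_smul, sum_sub_distrib, Pi.single_apply]

theorem propHam_refl (T : ℕ) (hT : 1 ≤ T) (ψ : Fin (T + 1) → W) :
    propHam T (fun _ => LinearIsometryEquiv.refl ℂ W) ψ =
      fun s => ∑ r, (neumannChain T s r : ℂ) • ψ r := by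
  ext s
  have h_edge (t : Fin T) : pathIncidence T t s • (ψ t.castSucc - ψ t.succ) =
      (if s = t.castSucc then ψ t.castSucc - ψ t.succ else 0) +
        (if s = t.succ then ψ t.succ - ψ t.castSucc else 0) := by
    have hne : t.castSucc ≠ t.succ := Fin.castSucc_lt_succ.ne
    by_cases hc : s = t.castSucc
    · subst hc; simp [pathIncidence, hne]
    by_cases hs : s = t.succ
    · subst hs; simp [pathIncidence, hne.symm]
    · simp [pathIncidence, hc, hs]
  calc propHam T (fun _ => LinearIsometryEquiv.refl ℂ W) ψ s
      = (2 : ℝ)⁻¹ • ∑ t, pathIncidence T t s • ∑ r, pathIncidence T t r • ψ r := by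
        simp only [propHam_refl_apply, sum_pathIncidence_smul, h_edge]
        rw [← Complex.coe_smul, Complex.ofReal_inv, Complex.ofReal_ofNat]
    _ = ∑ r, neumannChain T s r • ψ r := by
        simp only [neumannChain_eq_sum_vecMulVec T hT, Matrix.smul_apply, Matrix.sum_apply,
          vecMulVec_apply, smul_sum, sum_smul, smul_eq_mul, mul_smul]
        exact sum_comm
    _ = ∑ r, (neumannChain T s r : ℂ) • ψ r := by simp only [Complex.coe_smul]

end

theorem propHam_decoupling_general {W : Type*} [NormedAddCommGroup W] [InnerProductSpace ℂ W]
    (T : ℕ) (hT : 1 ≤ T) (U : Fin T → (W ≃ₗᵢ[ℂ] W)) :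
    (∀ (a : ℂ) (ψ χ : Fin (T + 1) → W),
      clockRotation T U (a • ψ + χ) = a • clockRotation T U ψ + clockRotation T U χ) ∧
    Function.Bijective (clockRotation T U) ∧
    (∀ ψ χ : Fin (T + 1) → W,
      ∑ t, (inner ℂ (clockRotation T U ψ t) (clockRotation T U χ t) : ℂ) =
        ∑ t, (inner ℂ (ψ t) (χ t) : ℂ)) ∧
    (∀ ψ : Fin (T + 1) → W,
      propHam T U (clockRotation T U ψ) =
        clockRotation T U (fun t => ∑ s, (neumannChain T t s : ℂ) • ψ s)) := by
  refine ⟨fun a ψ χ => ?_, ?_, sum_inner_clockRotation T U, fun ψ => ?_⟩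
  · simp only [← coe_clockRotationEquiv, map_add, map_smul]
  · exact coe_clockRotationEquiv T U ▸ (clockRotationEquiv T U).bijective
  · rw [propHam_clockRotation, propHam_refl T hT]

/-- **Decoupling of the propagation Hamiltonian.**  The map
`V = ∑_t |t⟩⟨t| ⊗ U_t ⋯ U_1` is unitary (linear, bijective and inner-product
preserving) and conjugates `H_p` into `L ⊗ Id_W`, where `L` is one half of the graph
Laplacian of the path on the `T+1` clock sites:  `H_p ∘ V = V ∘ (L ⊗ Id_W)`. -/
theorem propHam_decoupling {W : Type*} [NormedAddCommGroup W] [InnerProductSpace ℂ W]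
    [FiniteDimensional ℂ W] (T : ℕ) (hT : 1 ≤ T) (U : Fin T → (W ≃ₗᵢ[ℂ] W)) :
    (∀ (a : ℂ) (ψ χ : Fin (T + 1) → W),
      clockRotation T U (a • ψ + χ) = a • clockRotation T U ψ + clockRotation T U χ) ∧
    Function.Bijective (clockRotation T U) ∧
    (∀ ψ χ : Fin (T + 1) → W,
      ∑ t, (inner ℂ (clockRotation T U ψ t) (clockRotation T U χ t) : ℂ) =
        ∑ t, (inner ℂ (ψ t) (χ t) : ℂ)) ∧
    (∀ ψ : Fin (T + 1) → W,
      propHam T U (clockRotation T U ψ) =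
        clockRotation T U (fun t => ∑ s, (neumannChain T t s : ℂ) • ψ s)) :=
  propHam_decoupling_general T hT U

end
end
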